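/- The classic relative entropy sits between partial semantic relative entropies: D_s(p‖q_s) ≤ D(p‖q) ≤ D_s(p_s‖q). -/

import Mathlib

open Finset

/-- Probability of the block of index `i` under the partition induced by `blk`. -/
noncomputable def blockProb {U B : Type*} [Fintype U] [DecidableEq B]
    (p : U → ℝ) (blk : U → B) (i : B) : ℝ :=
  ∑ u : U, if blk u = i then p u else 0

/-- Classic relative entropy (Kullback–Leibler divergence, base 2). -/
noncomputable def relEntropy {U : Type*} [Fintype U] (p q : U → ℝ) : ℝ :=
  ∑ u : U, p u * Real.logb 2 (p u / q u)

/-- Partial semantic relative entropy `D_s(p_s‖q) = ∑_i ∑_{u∈U_i} p(u) log(P_p(U_i)/q(u))`. -/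
noncomputable def semRelEntropyLeft {U B : Type*} [Fintype U] [Fintype B] [DecidableEq B]
    (p q : U → ℝ) (blk : U → B) : ℝ :=
  ∑ u : U, p u * Real.logb 2 (blockProb p blk (blk u) / q u)

/-- Partial semantic relative entropy `D_s(p‖q_s) = ∑_i ∑_{u∈U_i} p(u) log(p(u)/P_q(U_i))`. -/
noncomputable def semRelEntropyRight {U B : Type*} [Fintype U] [Fintype B] [DecidableEq B]
    (p q : U → ℝ) (blk : U → B) : ℝ :=
  ∑ u : U, p u * Real.logb 2 (p u / blockProb q blk (blk u))

/-! Both inequalities hold term by term: an atom's probability is at most that of its block, and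
`logb 2` is monotone on positive arguments, while the terms with `p u = 0` vanish on both sides. -/

open Real

theorem le_blockProb {U B : Type*} [Fintype U] [DecidableEq B] {f : U → ℝ} (hf : ∀ u, 0 ≤ f u)
    (blk : U → B) (u : U) : f u ≤ blockProb f blk (blk u) := by
  unfold blockProb
  simpa using single_le_sum (f := fun v => if blk v = blk u then f v else 0)
    (fun v _ => by split_ifs <;> simp [hf v]) (mem_univ u)

section MulLogbDiv

variable {b a c : ℝ} (hb : 1 < b) (ha : 0 ≤ a)
include hb ha

theorem mul_logb_div_le_mul_logb_div_of_le_right {d : ℝ} (hc : 0 < c) (hcd : c ≤ d) :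
    a * logb b (a / d) ≤ a * logb b (a / c) := by
  rcases ha.eq_or_lt with rfl | ha
  · simp
  · have hd : 0 < d := hc.trans_le hcd
    gcongr

theorem mul_logb_div_le_mul_logb_div_of_le_left {a' : ℝ} (haa' : a ≤ a') (hc : 0 < c) :
    a * logb b (a / c) ≤ a * logb b (a' / c) := by
  rcases ha.eq_or_lt with rfl | ha
  · simp
  · gcongr

end MulLogbDiv

theorem relEntropy_between_semRelEntropies {U B : Type*} [Fintype U] [Fintype B] [DecidableEq B]
    (p q : U → ℝ) (blk : U → B)
    (hp : ∀ u, 0 ≤ p u)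
    (hq : ∀ u, 0 < q u) :
    semRelEntropyRight p q blk ≤ relEntropy p q ∧
      relEntropy p q ≤ semRelEntropyLeft p q blk := by
  have hq_le : ∀ u, q u ≤ blockProb q blk (blk u) := le_blockProb (fun u => (hq u).le) blk
  constructor <;> refine sum_le_sum fun u _ => ?_
  · exact mul_logb_div_le_mul_logb_div_of_le_right one_lt_two (hp u) (hq u) (hq_le u)
  · exact mul_logb_div_le_mul_logb_div_of_le_left one_lt_two (hp u) (le_blockProb hp blk u) (hq u)
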